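/- There exists a constant C > 0 such that for every T ∈ (0, 1] and every τ ∈ ℝ, ∫₀^T | ∫_{t'}^T e^{−i t τ} dt |² dt' ≤ C · T · min(T, ⟨τ⟩^{−1})². -/

import Mathlib

/-!
The inner integral is bounded trivially by the length `T - t' ≤ T` of its interval, and, after
integrating the exponential explicitly, by `2 / |τ|`. Since `T ≤ 1`, these two bounds give
`‖∫‖² ⟨τ⟩² = ‖∫‖² + (|τ| ‖∫‖)² ≤ 5`, so `‖∫‖² ≤ 5 min(T, ⟨τ⟩⁻¹)²` pointwise in `t'`, and the outer
integral over `[0, T]` contributes the factor `T`.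
-/

open MeasureTheory Real

/-- The Japanese bracket `⟨x⟩ = (1 + x²)^{1/2}`. -/
noncomputable def jpn (x : ℝ) : ℝ := Real.sqrt (1 + x ^ 2)

lemma jpn_pos (x : ℝ) : 0 < jpn x := Real.sqrt_pos.2 (by positivity)

lemma jpn_sq (x : ℝ) : jpn x ^ 2 = 1 + x ^ 2 := Real.sq_sqrt (by positivity)

lemma norm_cexp_neg_I_mul_mul (t τ : ℝ) : ‖Complex.exp (-Complex.I * t * τ)‖ = 1 := by
  rw [Complex.norm_exp]
  simp

lemma norm_integral_cexp_neg_I_mul_mul_le (a b τ : ℝ) :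
    ‖∫ t in a..b, Complex.exp (-Complex.I * t * τ)‖ ≤ |b - a| := by
  simpa using intervalIntegral.norm_integral_le_of_norm_le_const
    (fun t _ => (norm_cexp_neg_I_mul_mul t τ).le)

lemma abs_mul_norm_integral_cexp_neg_I_mul_mul_le (a b τ : ℝ) :
    |τ| * ‖∫ t in a..b, Complex.exp (-Complex.I * t * τ)‖ ≤ 2 := by
  rcases eq_or_ne τ 0 with rfl | hτ
  · simp
  have hc : -Complex.I * τ ≠ 0 := by simp [hτ]
  have hint : ∫ t in a..b, Complex.exp (-Complex.I * t * τ)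
      = (Complex.exp (-Complex.I * b * τ) - Complex.exp (-Complex.I * a * τ)) / (-Complex.I * τ) := by
    simpa only [mul_right_comm (-Complex.I)] using integral_exp_mul_complex (a := a) (b := b) hc
  have hnum : ‖Complex.exp (-Complex.I * b * τ) - Complex.exp (-Complex.I * a * τ)‖ ≤ 2 := by
    refine (norm_sub_le _ _).trans ?_
    rw [norm_cexp_neg_I_mul_mul, norm_cexp_neg_I_mul_mul]
    norm_num
  rw [hint, norm_div, show ‖-Complex.I * τ‖ = |τ| by simp,
    mul_div_cancel₀ _ (abs_ne_zero.2 hτ)]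
  exact hnum

lemma sq_le_five_mul_min_jpn_inv_sq {x T τ : ℝ} (hx : 0 ≤ x) (hxT : x ≤ T) (hT : T ≤ 1)
    (hτx : |τ| * x ≤ 2) : x ^ 2 ≤ 5 * min T (jpn τ)⁻¹ ^ 2 := by
  rcases le_total T (jpn τ)⁻¹ with h | h
  · rw [min_eq_left h]
    nlinarith
  · rw [min_eq_right h, inv_pow, ← div_eq_mul_inv, le_div_iff₀ (pow_pos (jpn_pos τ) 2),
      jpn_sq]
    have hτx2 : (|τ| * x) ^ 2 ≤ 2 ^ 2 := pow_le_pow_left₀ (by positivity) hτx 2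
    nlinarith [sq_abs τ]

/-- Key bound in the stochastic convolution estimate: uniformly in `T ∈ (0,1]` and `τ ∈ ℝ`,
`∫₀^T |∫_{t'}^T e^{-itτ} dt|² dt' ≤ C T min(T, ⟨τ⟩⁻¹)²`. -/
theorem stochastic_convolution_time_bound :
    ∃ C : ℝ, 0 < C ∧ ∀ T : ℝ, 0 < T → T ≤ 1 → ∀ τ : ℝ,
      (∫ t' in (0 : ℝ)..T,
          ‖∫ t in t'..T, Complex.exp (-Complex.I * (t : ℂ) * (τ : ℂ))‖ ^ 2)
        ≤ C * T * min T (jpn τ)⁻¹ ^ 2 := by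
  refine ⟨5, by norm_num, fun T hT0 hT1 τ => ?_⟩
  have hpointwise : ∀ t' ∈ Set.uIoc 0 T,
      ‖‖∫ t in t'..T, Complex.exp (-Complex.I * t * τ)‖ ^ 2‖ ≤ 5 * min T (jpn τ)⁻¹ ^ 2 := by
    intro t' ht'
    rw [Set.uIoc_of_le hT0.le] at ht'
    rw [norm_pow, norm_norm]
    refine sq_le_five_mul_min_jpn_inv_sq (norm_nonneg _) ?_ hT1
      (abs_mul_norm_integral_cexp_neg_I_mul_mul_le t' T τ)
    refine (norm_integral_cexp_neg_I_mul_mul_le t' T τ).trans ?_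
    rw [abs_of_nonneg (by linarith [ht'.2])]
    linarith [ht'.1]
  calc _ ≤ ‖∫ t' in (0 : ℝ)..T, ‖∫ t in t'..T, Complex.exp (-Complex.I * t * τ)‖ ^ 2‖ :=
        le_abs_self _
    _ ≤ 5 * min T (jpn τ)⁻¹ ^ 2 * |T - 0| :=
        intervalIntegral.norm_integral_le_of_norm_le_const hpointwise
    _ = 5 * T * min T (jpn τ)⁻¹ ^ 2 := by rw [sub_zero, abs_of_pos hT0]; ring
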